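/- Let T : I → I be Borel measurable (I = [0,1]), let m be Lebesgue measure on I, let μ be a Borel probability measure on I, fix α ∈ (0,1] and a function Φ : ℕ → (0,∞). Assume that for every α-Hölder function f : I → ℝ, every bounded measurable g : I → ℝ and every n ≥ 1 one has Conv_n(f,g) ≤ ‖g‖_∞ · ‖f‖_{H(α)} · Φ(n). Then for every f ∈ BV_{1,α}, every bounded measurable g, every n ≥ 1 and every ε ∈ (0,1], Conv_n(f,g) ≤ ‖g‖_∞ · ‖f‖_{1,α} · ( 2 ε^α + 4 ε^{−α} Φ(n) ). -/

import Mathlib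

open MeasureTheory Set Filter Metric
open scoped ENNReal

noncomputable section

/-- The unit interval `I = [0,1]`. -/
def II : Set ℝ := Set.Icc 0 1

/-- The essential oscillation of `h` over the `ε`-ball around `x`, intersected with `I`:
`osc(h,ε,x) = ess sup { |h(y₁) − h(y₂)| : y₁, y₂ ∈ B_ε(x) ∩ I }`,
the essential supremum being taken with respect to Lebesgue measure. -/
def osc (h : ℝ → ℝ) (ε x : ℝ) : ℝ≥0∞ :=
  essSup (fun p : ℝ × ℝ => ENNReal.ofReal |h p.1 - h p.2|)
    ((volume.restrict (Metric.ball x ε ∩ II)).prod (volume.restrict (Metric.ball x ε ∩ II)))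

/-- `osc_1(h,ε) = ∫_I osc(h,ε,x) dm(x)`. -/
def osc1 (h : ℝ → ℝ) (ε : ℝ) : ℝ≥0∞ := ∫⁻ x in II, osc h ε x

/-- `Var_{1,r}(h) = sup_{0 < ε ≤ 1} ε^{−r} osc_1(h,ε)` (cutoff `A = 1`). -/
def Var1 (r : ℝ) (h : ℝ → ℝ) : ℝ≥0∞ :=
  ⨆ ε ∈ Set.Ioc (0 : ℝ) 1, ENNReal.ofReal (ε ^ (-r)) * osc1 h ε

/-- `‖h‖_{1,r} = Var_{1,r}(h) + ‖h‖_{L¹(m)}`. -/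
def norm1r (r : ℝ) (h : ℝ → ℝ) : ℝ := (Var1 r h).toReal + ∫ x in II, |h x|

/-- `Conv_n(f,g) = | ∫_I f·(g∘Tⁿ) dm − (∫ g dμ)(∫_I f dm) |`. -/
def Conv (T : ℝ → ℝ) (μ : Measure ℝ) (n : ℕ) (f g : ℝ → ℝ) : ℝ :=
  |(∫ x in II, f x * g (T^[n] x)) - (∫ x, g x ∂μ) * ∫ x in II, f x|

/-!
Replace `f` by its moving average `φ` over the windows `B_ε(x) ∩ I`. Essential oscillations see
only pairs of points, but for a.e. `x` the value `f x` itself lies within `osc(f,ε,x)` of almost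
all values of `f` on its window (cover the pairs `|x - v| < ε` by countably many rational balls),
so `‖f - φ‖_{L¹} ≤ osc_1(f,ε) ≤ ε^α Var_{1,α}(f)`. The `ε = 1` term of `Var_{1,α}(f)` bounds the
essential oscillation `V` of `f` on all of `I`; hence `|φ| ≤ ‖f‖_{L¹} + V`, and sliding a window of
length at least `ε` by `d` changes the average by at most `2Vd/ε`, which together with the bound
`2V` makes `φ` `α`-Hölder with constant `2Vε^{-α}`. The hypothesis applied to `φ`, plus the cost
`2‖g‖_∞ ‖f - φ‖_{L¹}` of replacing `f` by `φ`, gives the estimate.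
-/

section EssentialOscillation

variable {X : Type*} [MeasurableSpace X] {μ : Measure X} {f : X → ℝ} {s t : Set X}

def essOsc (μ : Measure X) (f : X → ℝ) (s : Set X) : ℝ≥0∞ :=
  essSup (fun p : X × X => ENNReal.ofReal |f p.1 - f p.2|) ((μ.restrict s).prod (μ.restrict s))

lemma essOsc_mono [SFinite μ] (hst : s ⊆ t) : essOsc μ f s ≤ essOsc μ f t := by
  refine essSup_mono_measure (Measure.absolutelyContinuous_of_le ?_)
  rw [Measure.prod_restrict, Measure.prod_restrict]
  exact Measure.restrict_mono (prod_mono hst hst) le_rfl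

lemma essOsc_congr_set (hst : s =ᵐ[μ] t) : essOsc μ f s = essOsc μ f t := by
  rw [essOsc, essOsc, Measure.restrict_congr_set hst]

lemma ae_mem_prod_imp_le_essOsc [SFinite μ] (hs : MeasurableSet s) :
    ∀ᵐ p ∂μ.prod μ, p ∈ s ×ˢ s → ENNReal.ofReal |f p.1 - f p.2| ≤ essOsc μ f s := by
  rw [← ae_restrict_iff' (hs.prod hs), ← Measure.prod_restrict]
  exact ae_le_essSup

lemma ae_ae_abs_sub_le_of_essOsc_le [SFinite μ] {C : ℝ} (hC : 0 ≤ C)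
    (h : essOsc μ f s ≤ ENNReal.ofReal C) :
    ∀ᵐ u ∂μ.restrict s, ∀ᵐ v ∂μ.restrict s, |f u - f v| ≤ C := by
  refine Measure.ae_ae_of_ae_prod (p := fun p : X × X => |f p.1 - f p.2| ≤ C) ?_
  filter_upwards [ENNReal.ae_le_essSup (μ := (μ.restrict s).prod (μ.restrict s))
    (fun p : X × X => ENNReal.ofReal |f p.1 - f p.2|)] with p hp
  exact (ENNReal.ofReal_le_ofReal_iff hC).1 (hp.trans h)

end EssentialOscillation

section Average

variable {X : Type*} [MeasurableSpace X] {μ : Measure X} {f : X → ℝ} {r s t : Set X} {C : ℝ}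

lemma integrable_of_ae_ae_abs_sub_le [IsFiniteMeasure μ] (hf : AEStronglyMeasurable f μ)
    (h : ∀ᵐ u ∂μ, ∀ᵐ v ∂μ, |f u - f v| ≤ C) : Integrable f μ := by
  rcases eq_zero_or_neZero μ with rfl | _
  · exact integrable_zero_measure
  obtain ⟨u, hu⟩ := h.exists
  refine Integrable.mono' (integrable_const (|f u| + C)) hf ?_
  filter_upwards [hu] with v hv
  rw [Real.norm_eq_abs]
  linarith [abs_sub_abs_le_abs_sub (f v) (f u), abs_sub_comm (f v) (f u)]

lemma abs_average_sub_le_of_ae [IsFiniteMeasure μ] [NeZero μ] (hf : AEStronglyMeasurable f μ)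
    {b : ℝ} (h : ∀ᵐ u ∂μ, |f u - b| ≤ C) : |⨍ u, f u ∂μ - b| ≤ C := by
  have hfi : Integrable f μ := by
    refine Integrable.mono' (integrable_const (|b| + C)) hf ?_
    filter_upwards [h] with u hu
    rw [Real.norm_eq_abs]
    linarith [abs_sub_abs_le_abs_sub (f u) b]
  have hint : |∫ u, (f u - b) ∂μ| ≤ C * μ.real univ := by
    simpa using norm_integral_le_of_norm_le_const (f := fun u => f u - b) (by simpa using h)
  rw [integral_sub hfi (integrable_const b), integral_const, smul_eq_mul,
    ← measure_smul_average, smul_eq_mul, ← mul_sub, abs_mul, abs_of_pos measureReal_univ_pos,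
    mul_comm C] at hint
  exact le_of_mul_le_mul_left hint measureReal_univ_pos

lemma ae_abs_setAverage_sub_le (hr : μ r ≠ ∞) (hf : AEStronglyMeasurable f (μ.restrict r))
    (htr : t ⊆ r) (ht : μ t ≠ 0) (h : ∀ᵐ u ∂μ.restrict r, ∀ᵐ v ∂μ.restrict r, |f u - f v| ≤ C) :
    ∀ᵐ u ∂μ.restrict r, |⨍ v in t, f v ∂μ - f u| ≤ C := by
  have : IsFiniteMeasure (μ.restrict t) :=
    isFiniteMeasure_restrict.2 fun h => hr (measure_mono_top htr h)
  have : NeZero (μ.restrict t) := ⟨mt Measure.restrict_eq_zero.1 ht⟩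
  filter_upwards [h] with u hu
  refine abs_average_sub_le_of_ae (hf.mono_set htr) ?_
  filter_upwards [ae_restrict_of_ae_restrict_of_subset htr hu] with v hv
  rwa [abs_sub_comm]

lemma abs_setAverage_sub_setAverage_le (hr : μ r ≠ ∞)
    (hf : AEStronglyMeasurable f (μ.restrict r)) (hsr : s ⊆ r) (htr : t ⊆ r) (hs : μ s ≠ 0)
    (ht : μ t ≠ 0)
    (h : ∀ᵐ u ∂μ.restrict r, ∀ᵐ v ∂μ.restrict r, |f u - f v| ≤ C) :
    |⨍ u in s, f u ∂μ - ⨍ v in t, f v ∂μ| ≤ C := by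
  have : IsFiniteMeasure (μ.restrict s) :=
    isFiniteMeasure_restrict.2 fun h => hr (measure_mono_top hsr h)
  have : NeZero (μ.restrict s) := ⟨mt Measure.restrict_eq_zero.1 hs⟩
  refine abs_average_sub_le_of_ae (hf.mono_set hsr) ?_
  filter_upwards [ae_restrict_of_ae_restrict_of_subset hsr
    (ae_abs_setAverage_sub_le hr hf htr ht h)] with u hu
  rwa [abs_sub_comm]

/-- The integral of `f - ⨍_t f` vanishes on `t`, so on `s` it reduces to the symmetric difference,
where the integrand is bounded by `C`. -/
lemma abs_setAverage_sub_setAverage_mul_le (hs : MeasurableSet s) (ht : MeasurableSet t)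
    (hr : μ r ≠ ∞) (hf : IntegrableOn f r μ) (hsr : s ⊆ r) (htr : t ⊆ r)
    (h : ∀ᵐ u ∂μ.restrict r, |⨍ v in t, f v ∂μ - f u| ≤ C) :
    |⨍ u in s, f u ∂μ - ⨍ v in t, f v ∂μ| * μ.real s ≤
      C * (μ.real (s \ t) + μ.real (t \ s)) := by
  set b := ⨍ v in t, f v ∂μ
  have hfin : ∀ {a}, a ⊆ r → μ a ≠ ∞ := fun ha h => hr (measure_mono_top ha h)
  have hint : ∀ {a}, a ⊆ r → IntegrableOn (fun u => f u - b) a μ := fun ha =>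
    (hf.mono_set ha).sub (integrableOn_const (hfin ha))
  have hbound : ∀ {a}, a ⊆ r → |∫ u in a, (f u - b) ∂μ| ≤ C * μ.real a := fun ha => by
    rw [← Real.norm_eq_abs]
    refine norm_setIntegral_le_of_norm_le_const_ae (f := fun u => f u - b) (hfin ha).lt_top ?_
    filter_upwards [ae_restrict_of_ae_restrict_of_subset ha h] with u hu
    rwa [Real.norm_eq_abs, abs_sub_comm]
  have hs_int : ∫ u in s, (f u - b) ∂μ = (⨍ u in s, f u ∂μ - b) * μ.real s := by
    rw [integral_sub (hf.mono_set hsr) (integrableOn_const (hfin hsr)), setIntegral_const b,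
      ← measure_smul_setAverage f (hfin hsr), smul_eq_mul, smul_eq_mul]
    ring
  have ht_int : ∫ u in t, (f u - b) ∂μ = 0 := setAverage_sub_setAverage (hfin htr) f
  have hs_split := integral_inter_add_sdiff ht (hint hsr)
  have ht_split := integral_inter_add_sdiff hs (hint htr)
  rw [inter_comm, hs_int] at hs_split
  rw [ht_int] at ht_split
  calc |⨍ u in s, f u ∂μ - b| * μ.real s
      = |∫ u in s \ t, (f u - b) ∂μ - ∫ u in t \ s, (f u - b) ∂μ| := by
        rw [← abs_of_nonneg (measureReal_nonneg (s := s)), ← abs_mul]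
        congr 1
        linarith
    _ ≤ |∫ u in s \ t, (f u - b) ∂μ| + |∫ u in t \ s, (f u - b) ∂μ| := abs_sub _ _
    _ ≤ C * μ.real (s \ t) + C * μ.real (t \ s) :=
        add_le_add (hbound (sdiff_subset.trans hsr)) (hbound (sdiff_subset.trans htr))
    _ = C * (μ.real (s \ t) + μ.real (t \ s)) := by ring

end Average

lemma le_mul_div_rpow_of_le_of_mul_le {D K d ε α : ℝ} (hD : 0 ≤ D) (hd : 0 ≤ d) (hε : 0 < ε)
    (hα : α ∈ Icc (0 : ℝ) 1) (hDK : D ≤ K) (hDKd : D * ε ≤ K * d) : D ≤ K * (d / ε) ^ α := by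
  rcases le_total d ε with hdε | hεd
  · calc D ≤ K * (d / ε) := by rw [mul_div_assoc', le_div_iff₀ hε]; exact hDKd
      _ ≤ K * (d / ε) ^ α := by
          gcongr
          · linarith
          · exact Real.self_le_rpow_of_le_one (by positivity) ((div_le_one hε).2 hdε) hα.2
  · calc D ≤ K := hDK
      _ ≤ K * (d / ε) ^ α :=
          le_mul_of_one_le_right (hD.trans hDK) (Real.one_le_rpow ((one_le_div hε).2 hεd) hα.1)

lemma continuous_of_abs_sub_le_mul_rpow {φ : ℝ → ℝ} {C α : ℝ} (hα : 0 < α)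
    (h : ∀ x y, |φ x - φ y| ≤ C * |x - y| ^ α) : Continuous φ := by
  refine continuous_iff_continuousAt.2 fun x => tendsto_iff_dist_tendsto_zero.2 ?_
  refine squeeze_zero (fun _ => dist_nonneg) (fun y => h y x) ?_
  have hcont : Continuous fun y : ℝ => C * |y - x| ^ α :=
    continuous_const.mul ((continuous_id.sub continuous_const).abs.rpow_const fun _ => Or.inr hα.le)
  simpa [Real.zero_rpow hα.ne'] using hcont.tendsto x

lemma exists_rat_ball_subset_ball {x v ε : ℝ} (hv : dist v x < ε) :
    ∃ c r : ℚ, x ∈ ball (c : ℝ) r ∧ v ∈ ball (c : ℝ) r ∧ ball (c : ℝ) r ⊆ ball x ε := by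
  set δ := (ε - dist v x) / 3
  have hδ : 0 < δ := by simp only [δ]; linarith
  obtain ⟨c, hc⟩ : ∃ c : ℚ, dist x c < δ := by
    obtain ⟨c, hc⟩ := exists_rat_near x hδ
    exact ⟨c, by rwa [Real.dist_eq]⟩
  obtain ⟨r, hr₁, hr₂⟩ := exists_rat_btwn (show dist v x + δ < dist v x + 2 * δ by linarith)
  refine ⟨c, r, ?_, ?_, ball_subset_ball' ?_⟩
  · rw [mem_ball]; linarith [dist_nonneg (x := v) (y := x)]
  · rw [mem_ball]; linarith [dist_triangle v x c]
  · rw [dist_comm]; simp only [δ] at *; linarith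

lemma volume_ball_sdiff_ball_le (a b ε : ℝ) :
    volume (ball a ε \ ball b ε) ≤ ENNReal.ofReal |a - b| := by
  have hsub : ball a ε \ ball b ε ⊆ Ioc (a - ε) (b - ε) ∪ Ico (b + ε) (a + ε) := by
    intro v ⟨hva, hvb⟩
    rw [mem_ball, Real.dist_eq, abs_lt] at hva
    rw [mem_ball, Real.dist_eq, abs_lt, not_and_or, not_lt, not_lt] at hvb
    rcases hvb with h | h
    · exact Or.inl ⟨by linarith, by linarith⟩
    · exact Or.inr ⟨by linarith, by linarith⟩
  calc volume (ball a ε \ ball b ε)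
      ≤ volume (Ioc (a - ε) (b - ε)) + volume (Ico (b + ε) (a + ε)) :=
        (measure_mono hsub).trans (measure_union_le _ _)
    _ = ENNReal.ofReal |a - b| := by
        rw [Real.volume_Ioc, Real.volume_Ico]
        rcases le_total a b with h | h
        · rw [ENNReal.ofReal_of_nonpos (by linarith : a + ε - (b + ε) ≤ 0),
            abs_of_nonpos (by linarith)]
          ring_nf
        · rw [ENNReal.ofReal_of_nonpos (by linarith : b - ε - (a - ε) ≤ 0),
            abs_of_nonneg (by linarith)]
          ring_nf

lemma measurableSet_II : MeasurableSet II := measurableSet_Icc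

lemma volume_II : volume II = 1 := by simp [II]

lemma measurableSet_ball_inter_II (x ε : ℝ) : MeasurableSet (ball x ε ∩ II) :=
  measurableSet_ball.inter measurableSet_II

lemma volume_ball_inter_II_ne_top (x ε : ℝ) : volume (ball x ε ∩ II) ≠ ⊤ :=
  measure_ne_top_of_subset inter_subset_right (by simp [volume_II])

lemma le_volumeReal_ball_inter_II {x ε : ℝ} (hx : x ∈ II) (hε : ε ∈ Ioc (0 : ℝ) 1) :
    ε ≤ volume.real (ball x ε ∩ II) := by
  obtain ⟨hx0, hx1⟩ := hx
  obtain ⟨hε0, hε1⟩ := hε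
  have hsub : Ioo (max (x - ε) 0) (min (x + ε) 1) ⊆ ball x ε ∩ II := fun v ⟨hv0, hv1⟩ => by
    rw [max_lt_iff] at hv0
    rw [lt_min_iff] at hv1
    refine ⟨?_, hv0.2.le, hv1.2.le⟩
    rw [mem_ball, Real.dist_eq, abs_lt]
    constructor <;> linarith
  have hlen : ε ≤ min (x + ε) 1 - max (x - ε) 0 := by
    rcases min_cases (x + ε) 1 with ⟨h1, _⟩ | ⟨h1, _⟩ <;>
      rcases max_cases (x - ε) 0 with ⟨h2, _⟩ | ⟨h2, _⟩ <;> rw [h1, h2] <;> linarith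
  calc ε ≤ volume.real (Ioo (max (x - ε) 0) (min (x + ε) 1)) := by
        rw [Real.volume_real_Ioo_of_le (by linarith)]; exact hlen
    _ ≤ volume.real (ball x ε ∩ II) :=
        measureReal_mono hsub (volume_ball_inter_II_ne_top x ε)

lemma volume_ball_inter_II_ne_zero {x ε : ℝ} (hx : x ∈ II) (hε : ε ∈ Ioc (0 : ℝ) 1) :
    volume (ball x ε ∩ II) ≠ 0 := fun h => by
  have := le_volumeReal_ball_inter_II hx hε
  rw [measureReal_def, h, ENNReal.toReal_zero] at this
  linarith [hε.1]

lemma osc_eq_essOsc (h : ℝ → ℝ) (ε x : ℝ) : osc h ε x = essOsc volume h (ball x ε ∩ II) := rfl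

lemma ae_ae_abs_sub_le_osc (f : ℝ → ℝ) (ε : ℝ) :
    ∀ᵐ x ∂volume.restrict II, ∀ᵐ v ∂volume.restrict (ball x ε ∩ II),
      ENNReal.ofReal |f x - f v| ≤ osc f ε x := by
  have hrat : ∀ᵐ p ∂volume.prod volume, ∀ c r : ℚ,
      p ∈ (ball (c : ℝ) r ∩ II) ×ˢ (ball (c : ℝ) r ∩ II) →
        ENNReal.ofReal |f p.1 - f p.2| ≤ osc f r c := by
    simp only [ae_all_iff]
    exact fun c r => ae_mem_prod_imp_le_essOsc (measurableSet_ball_inter_II _ _)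
  rw [ae_restrict_iff' measurableSet_II]
  filter_upwards [Measure.ae_ae_of_ae_prod hrat] with x hx hxI
  rw [ae_restrict_iff' (measurableSet_ball_inter_II x ε)]
  filter_upwards [hx] with v hv ⟨hvx, hvI⟩
  obtain ⟨c, r, hxc, hvc, hsub⟩ := exists_rat_ball_subset_ball hvx
  exact (hv c r ⟨⟨hxc, hxI⟩, hvc, hvI⟩).trans (essOsc_mono (inter_subset_inter_left _ hsub))

lemma osc1_le_Var1 {ε : ℝ} (hε : ε ∈ Ioc (0 : ℝ) 1) (r : ℝ) (h : ℝ → ℝ) :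
    osc1 h ε ≤ ENNReal.ofReal (ε ^ r) * Var1 r h := by
  calc osc1 h ε = ENNReal.ofReal (ε ^ r) * (ENNReal.ofReal (ε ^ (-r)) * osc1 h ε) := by
        rw [← mul_assoc, ← ENNReal.ofReal_mul (Real.rpow_nonneg hε.1.le r), ← Real.rpow_add hε.1]
        simp
    _ ≤ ENNReal.ofReal (ε ^ r) * Var1 r h := by
        gcongr
        exact le_biSup (fun ε => ENNReal.ofReal (ε ^ (-r)) * osc1 h ε) hε

lemma essOsc_II_le_Var1 (r : ℝ) (h : ℝ → ℝ) : essOsc volume h II ≤ Var1 r h := by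
  have hosc : ∀ x ∈ II, essOsc volume h II ≤ osc h 1 x := fun x hx => by
    rw [← essOsc_congr_set (show Ioo (0 : ℝ) 1 =ᵐ[volume] II from Ioo_ae_eq_Icc), osc_eq_essOsc]
    refine essOsc_mono fun v hv => ⟨?_, Ioo_subset_Icc_self hv⟩
    rw [mem_ball, Real.dist_eq, abs_lt]
    obtain ⟨hx0, hx1⟩ := hx
    constructor <;> linarith [hv.1, hv.2]
  calc essOsc volume h II = ∫⁻ _ in II, essOsc volume h II := by simp [volume_II]
    _ ≤ osc1 h 1 := setLIntegral_mono' measurableSet_II hosc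
    _ ≤ Var1 r h := by simpa using osc1_le_Var1 (ε := 1) (by norm_num) r h

/-- `x` is first projected onto `I`, which makes the window average Hölder on all of `ℝ`. -/
def windowAverage (f : ℝ → ℝ) (ε x : ℝ) : ℝ :=
  ⨍ v in ball (projIcc 0 1 zero_le_one x : ℝ) ε ∩ II, f v

section WindowAverage

variable {f : ℝ → ℝ} {ε V : ℝ}

lemma windowAverage_of_mem {x : ℝ} (hx : x ∈ II) :
    windowAverage f ε x = ⨍ v in ball x ε ∩ II, f v := by
  rw [windowAverage, projIcc_of_mem zero_le_one hx]

lemma windowAverage_projIcc (x : ℝ) :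
    windowAverage f ε (projIcc 0 1 zero_le_one x) = windowAverage f ε x :=
  windowAverage_of_mem (projIcc 0 1 zero_le_one x).2

lemma abs_windowAverage_sub_integral_le (hf : IntegrableOn f II) (hε : ε ∈ Ioc (0 : ℝ) 1)
    (hV : ∀ᵐ u ∂volume.restrict II, ∀ᵐ v ∂volume.restrict II, |f u - f v| ≤ V) (x : ℝ) :
    |windowAverage f ε x - ∫ v in II, f v| ≤ V := by
  have hI : ⨍ v in II, f v = ∫ v in II, f v := by simp [setAverage_eq, measureReal_def, volume_II]
  rw [windowAverage, ← hI]
  exact abs_setAverage_sub_setAverage_le (by simp [volume_II]) hf.aestronglyMeasurable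
    inter_subset_right subset_rfl (volume_ball_inter_II_ne_zero (projIcc 0 1 _ x).2 hε)
    (by simp [volume_II]) hV

lemma abs_windowAverage_le (hf : IntegrableOn f II) (hε : ε ∈ Ioc (0 : ℝ) 1)
    (hV : ∀ᵐ u ∂volume.restrict II, ∀ᵐ v ∂volume.restrict II, |f u - f v| ≤ V) (x : ℝ) :
    |windowAverage f ε x| ≤ (∫ v in II, |f v|) + V := by
  linarith [abs_windowAverage_sub_integral_le hf hε hV x,
    abs_sub_abs_le_abs_sub (windowAverage f ε x) (∫ v in II, f v),
    abs_integral_le_integral_abs (f := f) (μ := volume.restrict II)]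

lemma abs_windowAverage_sub_windowAverage_mul_le (hf : IntegrableOn f II)
    (hε : ε ∈ Ioc (0 : ℝ) 1) (hV0 : 0 ≤ V)
    (hV : ∀ᵐ u ∂volume.restrict II, ∀ᵐ v ∂volume.restrict II, |f u - f v| ≤ V)
    {a b : ℝ} (ha : a ∈ II) (hb : b ∈ II) :
    |windowAverage f ε a - windowAverage f ε b| * ε ≤ 2 * V * |a - b| := by
  have hsdiff : ∀ a b : ℝ, volume.real ((ball a ε ∩ II) \ (ball b ε ∩ II)) ≤ |a - b| := by
    intro a b
    refine ENNReal.toReal_le_of_le_ofReal (abs_nonneg _) ?_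
    refine (measure_mono fun v hv => ?_).trans (volume_ball_sdiff_ball_le a b ε)
    exact ⟨hv.1.1, fun hvb => hv.2 ⟨hvb, hv.1.2⟩⟩
  rw [windowAverage_of_mem ha, windowAverage_of_mem hb]
  calc |(⨍ v in ball a ε ∩ II, f v) - ⨍ v in ball b ε ∩ II, f v| * ε
      ≤ |(⨍ v in ball a ε ∩ II, f v) - ⨍ v in ball b ε ∩ II, f v| *
          volume.real (ball a ε ∩ II) := by
        gcongr; exact le_volumeReal_ball_inter_II ha hε
    _ ≤ V * (volume.real ((ball a ε ∩ II) \ (ball b ε ∩ II)) +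
          volume.real ((ball b ε ∩ II) \ (ball a ε ∩ II))) :=
        abs_setAverage_sub_setAverage_mul_le (measurableSet_ball_inter_II a ε)
          (measurableSet_ball_inter_II b ε) (by simp [volume_II]) hf inter_subset_right
          inter_subset_right (ae_abs_setAverage_sub_le (by simp [volume_II])
            hf.aestronglyMeasurable inter_subset_right (volume_ball_inter_II_ne_zero hb hε) hV)
    _ ≤ V * (|a - b| + |b - a|) := by gcongr <;> apply hsdiff
    _ = 2 * V * |a - b| := by rw [abs_sub_comm b a]; ring

lemma abs_windowAverage_sub_windowAverage_le (hf : IntegrableOn f II) (hε : ε ∈ Ioc (0 : ℝ) 1)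
    (hV0 : 0 ≤ V) (hV : ∀ᵐ u ∂volume.restrict II, ∀ᵐ v ∂volume.restrict II, |f u - f v| ≤ V)
    {α : ℝ} (hα : α ∈ Icc (0 : ℝ) 1) (x y : ℝ) :
    |windowAverage f ε x - windowAverage f ε y| ≤ 2 * V * ε ^ (-α) * |x - y| ^ α := by
  set a := projIcc 0 1 zero_le_one x
  set b := projIcc 0 1 zero_le_one y
  have hab : |(a : ℝ) - b| ≤ |x - y| := abs_projIcc_sub_projIcc zero_le_one
  have hbdd : |windowAverage f ε a - windowAverage f ε b| ≤ 2 * V := by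
    linarith [abs_sub_le (windowAverage f ε a) (∫ v in II, f v) (windowAverage f ε b),
      abs_sub_comm (windowAverage f ε b) (∫ v in II, f v),
      abs_windowAverage_sub_integral_le hf hε hV a, abs_windowAverage_sub_integral_le hf hε hV b]
  rw [← windowAverage_projIcc x, ← windowAverage_projIcc y]
  calc |windowAverage f ε a - windowAverage f ε b| ≤ 2 * V * (|(a : ℝ) - b| / ε) ^ α :=
        le_mul_div_rpow_of_le_of_mul_le (abs_nonneg _) (abs_nonneg _) hε.1 hα hbdd
          (abs_windowAverage_sub_windowAverage_mul_le hf hε hV0 hV a.2 b.2)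
    _ ≤ 2 * V * (|x - y| / ε) ^ α := by have := hα.1; have := hε.1; gcongr
    _ = 2 * V * ε ^ (-α) * |x - y| ^ α := by
        rw [Real.div_rpow (abs_nonneg _) hε.1.le, Real.rpow_neg hε.1.le]; ring

lemma ae_abs_sub_windowAverage_le_osc (hf : IntegrableOn f II) (hε : ε ∈ Ioc (0 : ℝ) 1) :
    ∀ᵐ x ∂volume.restrict II, ENNReal.ofReal |f x - windowAverage f ε x| ≤ osc f ε x := by
  filter_upwards [ae_ae_abs_sub_le_osc f ε, ae_restrict_mem measurableSet_II] with x hx hxI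
  rcases eq_top_or_lt_top (osc f ε x) with htop | hfin
  · simp [htop]
  have : IsFiniteMeasure (volume.restrict (ball x ε ∩ II)) :=
    isFiniteMeasure_restrict.2 (volume_ball_inter_II_ne_top x ε)
  have : NeZero (volume.restrict (ball x ε ∩ II)) :=
    ⟨mt Measure.restrict_eq_zero.1 (volume_ball_inter_II_ne_zero hxI hε)⟩
  rw [← ENNReal.ofReal_toReal hfin.ne, windowAverage_of_mem hxI, abs_sub_comm]
  refine ENNReal.ofReal_le_ofReal (abs_average_sub_le_of_ae
    (hf.aestronglyMeasurable.mono_set inter_subset_right) ?_)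
  filter_upwards [hx] with v hv
  rw [abs_sub_comm]
  exact (ENNReal.ofReal_le_iff_le_toReal hfin.ne).1 hv

lemma integral_abs_sub_windowAverage_le (hf : IntegrableOn f II)
    (hφ : IntegrableOn (windowAverage f ε) II) (hε : ε ∈ Ioc (0 : ℝ) 1) {r : ℝ}
    (hVar : Var1 r f ≠ ⊤) :
    ∫ x in II, |f x - windowAverage f ε x| ≤ ε ^ r * (Var1 r f).toReal := by
  have h := (lintegral_mono_ae (ae_abs_sub_windowAverage_le_osc hf hε)).trans
    (osc1_le_Var1 hε r f)
  rw [← ofReal_integral_eq_lintegral_ofReal (f := fun x => |f x - windowAverage f ε x|)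
    (hf.sub hφ).abs
    (Eventually.of_forall fun _ => abs_nonneg _)] at h
  have := ENNReal.toReal_mono (ENNReal.mul_ne_top ENNReal.ofReal_ne_top hVar) h
  rwa [ENNReal.toReal_ofReal (integral_nonneg fun _ => abs_nonneg _), ENNReal.toReal_mul,
    ENNReal.toReal_ofReal (Real.rpow_nonneg hε.1.le r)] at this

end WindowAverage

lemma Conv_le_Conv_add (T : ℝ → ℝ) (hT : Measurable T) (μ : Measure ℝ) [IsProbabilityMeasure μ]
    (n : ℕ) {f φ g : ℝ → ℝ} {K : ℝ} (hf : IntegrableOn f II) (hφ : IntegrableOn φ II)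
    (hg : Measurable g) (hgK : ∀ x, |g x| ≤ K) :
    Conv T μ n f g ≤ Conv T μ n φ g + 2 * K * ∫ x in II, |f x - φ x| := by
  set G := fun x => g (T^[n] x)
  set c := ∫ x, g x ∂μ
  set D := ∫ x in II, |f x - φ x|
  have hGK : ∀ᵐ x ∂volume.restrict II, ‖G x‖ ≤ K := Eventually.of_forall fun x => hgK _
  have hG : AEStronglyMeasurable G (volume.restrict II) :=
    (hg.comp (hT.iterate n)).aestronglyMeasurable
  have hD₁ : |∫ x in II, (f x - φ x) * G x| ≤ K * D := by
    rw [← Real.norm_eq_abs, ← integral_const_mul]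
    refine norm_integral_le_of_norm_le ((hf.sub hφ).abs.const_mul K) ?_
    filter_upwards [hGK] with x hx
    rw [norm_mul, Real.norm_eq_abs, mul_comm]
    exact mul_le_mul_of_nonneg_right hx (abs_nonneg _)
  have hD₂ : |c * ∫ x in II, (f x - φ x)| ≤ K * D := by
    rw [abs_mul]
    refine mul_le_mul ?_ abs_integral_le_integral_abs (abs_nonneg _) ((abs_nonneg _).trans (hgK 0))
    simpa using norm_integral_le_of_norm_le_const (μ := μ) (f := g) (C := K)
      (Eventually.of_forall hgK)
  have hsplit : (∫ x in II, f x * G x) - c * ∫ x in II, f x =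
      ((∫ x in II, φ x * G x) - c * ∫ x in II, φ x) +
        ((∫ x in II, (f x - φ x) * G x) - c * ∫ x in II, (f x - φ x)) := by
    simp only [sub_mul]
    rw [integral_sub (hf.mul_bdd hG hGK) (hφ.mul_bdd hG hGK), integral_sub hf hφ]
    ring
  unfold Conv
  rw [hsplit]
  linarith [abs_add_le ((∫ x in II, φ x * G x) - c * ∫ x in II, φ x)
    ((∫ x in II, (f x - φ x) * G x) - c * ∫ x in II, (f x - φ x)),
    abs_sub (∫ x in II, (f x - φ x) * G x) (c * ∫ x in II, (f x - φ x))]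

theorem holder_to_bounded_variation_convergence_eps_general
    (T : ℝ → ℝ) (hT : Measurable T)
    (μ : Measure ℝ) [IsProbabilityMeasure μ]
    (α : ℝ) (hα : α ∈ Set.Ioc (0 : ℝ) 1)
    (Φ : ℕ → ℝ) (hΦ : ∀ n, 0 < Φ n)
    (hyp : ∀ (f g : ℝ → ℝ) (Hf Kf Kg : ℝ),
      (∀ x y, |f x - f y| ≤ Hf * |x - y| ^ α) →
      (∀ x, |f x| ≤ Kf) →
      Measurable g → (∀ x, |g x| ≤ Kg) →
      ∀ n : ℕ, 1 ≤ n → Conv T μ n f g ≤ Kg * (Kf + Hf) * Φ n) :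
    ∀ (f g : ℝ → ℝ) (Kg : ℝ),
      Measurable f → Var1 α f < ⊤ →
      Measurable g → (∀ x, |g x| ≤ Kg) →
      ∀ n : ℕ, 1 ≤ n → ∀ ε ∈ Set.Ioc (0 : ℝ) 1,
        Conv T μ n f g ≤ Kg * norm1r α f * (2 * ε ^ α + 4 * ε ^ (-α) * Φ n) := by
  intro f g Kg hf hVar hg hgK n hn ε hε
  set V := (Var1 α f).toReal
  set N := ∫ v in II, |f v|
  have hV : ∀ᵐ u ∂volume.restrict II, ∀ᵐ v ∂volume.restrict II, |f u - f v| ≤ V :=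
    ae_ae_abs_sub_le_of_essOsc_le ENNReal.toReal_nonneg
      ((essOsc_II_le_Var1 α f).trans_eq (ENNReal.ofReal_toReal hVar.ne).symm)
  have : IsFiniteMeasure (volume.restrict II) := Real.isFiniteMeasure_restrict_Icc 0 1
  have hfI : IntegrableOn f II := integrable_of_ae_ae_abs_sub_le hf.aestronglyMeasurable hV
  set φ := windowAverage f ε
  have hφ_holder := abs_windowAverage_sub_windowAverage_le hfI hε ENNReal.toReal_nonneg hV
    (Ioc_subset_Icc_self hα)
  have hφI : IntegrableOn φ II :=
    (continuous_of_abs_sub_le_mul_rpow hα.1 hφ_holder).integrableOn_Icc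
  have hKg : 0 ≤ Kg := (abs_nonneg _).trans (hgK 0)
  have hN : 0 ≤ N := integral_nonneg fun _ => abs_nonneg _
  have hV0 : 0 ≤ V := ENNReal.toReal_nonneg
  have hεα : 0 < ε ^ α := Real.rpow_pos_of_pos hε.1 α
  have hεα' : 1 ≤ ε ^ (-α) :=
    Real.one_le_rpow_of_pos_of_le_one_of_nonpos hε.1 hε.2 (neg_nonpos.2 hα.1.le)
  have hconst := mul_le_mul_of_nonneg_left
    (show N + V + 2 * V * ε ^ (-α) ≤ 4 * ε ^ (-α) * (V + N) by nlinarith)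
    (mul_nonneg hKg (hΦ n).le)
  calc Conv T μ n f g ≤ Conv T μ n φ g + 2 * Kg * ∫ x in II, |f x - φ x| :=
        Conv_le_Conv_add T hT μ n hfI hφI hg hgK
    _ ≤ Kg * ((N + V) + 2 * V * ε ^ (-α)) * Φ n + 2 * Kg * (ε ^ α * V) := by
        gcongr
        · exact hyp φ g _ _ Kg hφ_holder (abs_windowAverage_le hfI hε hV) hg hgK n hn
        · exact integral_abs_sub_windowAverage_le hfI hφI hε hVar.ne
    _ ≤ Kg * norm1r α f * (2 * ε ^ α + 4 * ε ^ (-α) * Φ n) := by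
        rw [show norm1r α f = V + N from rfl]
        nlinarith [mul_nonneg (mul_nonneg hKg hεα.le) hN]

/-- If convergence to equilibrium holds with speed `Φ` for `α`-Hölder `f` against bounded
measurable `g`, then for `f ∈ BV_{1,α}`, bounded measurable `g`, `n ≥ 1` and `ε ∈ (0,1]`,
`Conv_n(f,g) ≤ ‖g‖_∞ ‖f‖_{1,α} (2 ε^α + 4 ε^{−α} Φ(n))`. -/
theorem holder_to_bounded_variation_convergence_eps
    (T : ℝ → ℝ) (hT : Measurable T) (hTI : Set.MapsTo T II II)
    (μ : Measure ℝ) [IsProbabilityMeasure μ] (hμI : μ II = 1)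
    (α : ℝ) (hα : α ∈ Set.Ioc (0 : ℝ) 1)
    (Φ : ℕ → ℝ) (hΦ : ∀ n, 0 < Φ n)
    (hyp : ∀ (f g : ℝ → ℝ) (Hf Kf Kg : ℝ),
      (∀ x y, |f x - f y| ≤ Hf * |x - y| ^ α) →
      (∀ x, |f x| ≤ Kf) →
      Measurable g → (∀ x, |g x| ≤ Kg) →
      ∀ n : ℕ, 1 ≤ n → Conv T μ n f g ≤ Kg * (Kf + Hf) * Φ n) :
    ∀ (f g : ℝ → ℝ) (Kg : ℝ),
      Measurable f → Var1 α f < ⊤ →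
      Measurable g → (∀ x, |g x| ≤ Kg) →
      ∀ n : ℕ, 1 ≤ n → ∀ ε ∈ Set.Ioc (0 : ℝ) 1,
        Conv T μ n f g ≤ Kg * norm1r α f * (2 * ε ^ α + 4 * ε ^ (-α) * Φ n) :=
  holder_to_bounded_variation_convergence_eps_general T hT μ α hα Φ hΦ hyp
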